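/- arXiv:1805.03811 — 2 statements merged into one kernel-verified Lean document; each statement's English description precedes it below -/
import Mathlib

section
/- Let λ, μ be real numbers with μ > 0 and λ + μ > 0. Let ξ¹, ξ² ∈ ℝ³ be linearly independent unit vectors satisfying the interaction condition ξ¹·ξ² < −λ/(λ + 2μ), and let τ¹, τ² ∈ ℝ satisfy (τ¹)² = (τ²)² = μ and τ¹τ² = μ. Then there exist real numbers b₊ ≠ b₋ with b₊·b₋ = 1 (in particular both nonzero) such that each b ∈ {b₊, b₋} is a root of the quadratic equation (λ + μ)b² + 2((λ + 2μ)(ξ¹·ξ²) − μ)b + (λ + μ) = 0 and satisfies (τ¹ + bτ²)² = (λ + 2μ)·|ξ¹ + bξ²|². Moreover the two covectors (τ¹ + b₊τ², ξ¹ + b₊ξ²) and (τ¹ + b₋τ², ξ¹ + b₋ξ²) are linearly independent in ℝ × ℝ³. (Under the interaction condition, two S-characteristic covectors produce two independent P-characteristic combinations: part (2) of the lemma on S–S interactions.) -/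
/-!
Each S-characteristic `(τⁱ, ξⁱ)` has `(τⁱ)² = μ |ξⁱ|²`, and `τ¹τ² = μ`, so the P-characteristic
condition for `(τ¹ + bτ², ξ¹ + bξ²)` reduces to the palindromic quadratic
`(λ + μ) b² + 2((λ + 2μ) ξ¹·ξ² − μ) b + (λ + μ) = 0`. The interaction condition says exactly
that its middle coefficient is below `−2(λ + μ)`, so it has two distinct real roots, whose
product is `1`. Distinct roots give independent spatial parts `ξ¹ + bξ²`, hence independent
covectors.
-/

/-- Euclidean dot product on ℝ³. -/
def dot (x y : Fin 3 → ℝ) : ℝ := ∑ i, x i * y i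

lemma dot_add_smul_self (x y : Fin 3 → ℝ) (b : ℝ) :
    dot (x + b • y) (x + b • y) = dot x x + 2 * b * dot x y + b ^ 2 * dot y y := by
  simp only [dot, Pi.add_apply, Pi.smul_apply, smul_eq_mul, Fin.sum_univ_three]
  ring

lemma exists_roots_ne_mul_eq_one_of_palindromic {A c : ℝ} (hA : A ≠ 0) (hD : A ^ 2 < c ^ 2) :
    ∃ bp bm : ℝ, bp ≠ bm ∧ bp * bm = 1 ∧
      ∀ b ∈ ({bp, bm} : Set ℝ), A * b ^ 2 + 2 * c * b + A = 0 := by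
  obtain ⟨d, hd_pos, hd_sq⟩ : ∃ d : ℝ, 0 < d ∧ d ^ 2 = c ^ 2 - A ^ 2 :=
    ⟨√(c ^ 2 - A ^ 2), by positivity, Real.sq_sqrt (by linarith)⟩
  have is_root : ∀ e : ℝ, e ^ 2 = c ^ 2 - A ^ 2 →
      A * ((-c + e) / A) ^ 2 + 2 * c * ((-c + e) / A) + A = 0 := by
    intro e he
    field_simp
    linear_combination he
  refine ⟨(-c + d) / A, (-c + -d) / A, ?_, ?_, ?_⟩
  · rw [Ne, div_left_inj' hA]
    linarith
  · rw [div_mul_div_comm, div_eq_one_iff_eq (by positivity)]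
    linear_combination -hd_sq
  · rintro b (rfl | rfl)
    · exact is_root d hd_sq
    · exact is_root (-d) (by rw [neg_sq, hd_sq])

lemma LinearIndependent.pair_add_smul {K M : Type*} [Field K] [AddCommGroup M] [Module K M]
    {x y : M} (h : LinearIndependent K ![x, y]) {b b' : K} (hb : b ≠ b') :
    LinearIndependent K ![x + b • y, x + b' • y] := by
  rw [LinearIndependent.pair_iff] at h ⊢
  intro u v huv
  obtain ⟨hx, hy⟩ := h (u + v) (u * b + v * b') (by rw [← huv]; module)
  have hu : u * (b - b') = 0 := by linear_combination hy - b' * hx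
  have hu : u = 0 := (mul_eq_zero.mp hu).resolve_right (sub_ne_zero.mpr hb)
  exact ⟨hu, by linear_combination hx - hu⟩

/-- Under the interaction condition, two S-characteristic covectors produce two
linearly independent P-characteristic combinations. -/
theorem ss_interaction_two_P (lam mu : ℝ) (hmu : 0 < mu) (hlm : 0 < lam + mu)
    (ξ1 ξ2 : Fin 3 → ℝ) (hind : LinearIndependent ℝ ![ξ1, ξ2])
    (hξ1 : dot ξ1 ξ1 = 1) (hξ2 : dot ξ2 ξ2 = 1)
    (hint : dot ξ1 ξ2 < -lam / (lam + 2 * mu))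
    (τ1 τ2 : ℝ) (hτ1 : τ1 ^ 2 = mu) (hτ2 : τ2 ^ 2 = mu)
    (hτ12 : τ1 * τ2 = mu) :
    ∃ bp bm : ℝ, bp ≠ bm ∧ bp * bm = 1 ∧
      (∀ b ∈ ({bp, bm} : Set ℝ),
        (lam + mu) * b ^ 2 + 2 * ((lam + 2 * mu) * dot ξ1 ξ2 - mu) * b + (lam + mu) = 0 ∧
        (τ1 + b * τ2) ^ 2 = (lam + 2 * mu) * dot (ξ1 + b • ξ2) (ξ1 + b • ξ2)) ∧
      LinearIndependent ℝ
        ![((τ1 + bp * τ2, ξ1 + bp • ξ2) : ℝ × (Fin 3 → ℝ)),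
          ((τ1 + bm * τ2, ξ1 + bm • ξ2) : ℝ × (Fin 3 → ℝ))] := by
  have hmiddle : (lam + 2 * mu) * dot ξ1 ξ2 - mu < -(lam + mu) := by
    have := (lt_div_iff₀ (by linarith : 0 < lam + 2 * mu)).mp hint
    linarith
  obtain ⟨bp, bm, hne, hprod, hroots⟩ :=
    exists_roots_ne_mul_eq_one_of_palindromic (c := (lam + 2 * mu) * dot ξ1 ξ2 - mu) hlm.ne'
      (by nlinarith)
  refine ⟨bp, bm, hne, hprod, fun b hb => ⟨hroots b hb, ?_⟩, ?_⟩
  · rw [dot_add_smul_self, hξ1, hξ2]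
    linear_combination hτ1 + b ^ 2 * hτ2 + 2 * b * hτ12 - hroots b hb
  · refine LinearIndependent.of_comp (LinearMap.snd ℝ ℝ (Fin 3 → ℝ)) ?_
    rw [show _ ∘ _ = ![ξ1 + bp • ξ2, ξ1 + bm • ξ2] by ext i : 1; fin_cases i <;> rfl]
    exact hind.pair_add_smul hne
end

section
/- Let λ, μ, A, B be real numbers and ξ¹, ξ² ∈ ℝ³, set ξ^P = ξ¹ + ξ², and let H(p¹, p²) be the S–S interaction symbol scalar. Let ξ^V ∈ ℝ³ be a unit vector with ξ^V·ξ¹ = 0 and ξ^V·ξ² = 0. Then H(ξ^V, ξ^V) = (λ + B)·(ξ¹·ξ²)·|ξ^P|² + (2μ + A/2)·(ξ¹·ξ^P)·(ξ²·ξ^P). (The P-wave output of the interaction of two S waves both polarized perpendicular to the interaction plane; it is generically nonvanishing exactly when λ + B ≠ 0 or 2μ + A/2 ≠ 0.) -/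
/-- The S–S interaction symbol scalar H(p¹, p²) for two S waves with covectors
ξ¹, ξ² and polarizations p¹, p². -/
noncomputable def HSS (lam mu A B : ℝ) (ξ1 ξ2 p1 p2 : Fin 3 → ℝ) : ℝ :=
  lam * dot p1 p2 * dot ξ1 ξ2 * dot (ξ1 + ξ2) (ξ1 + ξ2)
    + mu * (dot p1 (ξ1 + ξ2) * dot ξ1 ξ2 + dot ξ1 (ξ1 + ξ2) * dot p1 ξ2)
        * dot p2 (ξ1 + ξ2)
    + mu * dot p1 p2 * dot ξ1 (ξ1 + ξ2) * dot ξ2 (ξ1 + ξ2)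
    + mu * (dot p2 (ξ1 + ξ2) * dot ξ2 ξ1 + dot ξ2 (ξ1 + ξ2) * dot p2 ξ1)
        * dot p1 (ξ1 + ξ2)
    + mu * dot p1 p2 * dot ξ2 (ξ1 + ξ2) * dot ξ1 (ξ1 + ξ2)
    + (A / 2) * (dot p1 (ξ1 + ξ2) * dot p2 (ξ1 + ξ2) * dot ξ1 ξ2
      + dot p1 (ξ1 + ξ2) * dot ξ2 (ξ1 + ξ2) * dot ξ1 p2
      + dot ξ1 (ξ1 + ξ2) * dot p2 (ξ1 + ξ2) * dot p1 ξ2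
      + dot ξ1 (ξ1 + ξ2) * dot ξ2 (ξ1 + ξ2) * dot p1 p2)
    + B * (dot p1 p2 * dot ξ1 ξ2 + dot p1 ξ2 * dot ξ1 p2)
        * dot (ξ1 + ξ2) (ξ1 + ξ2)

theorem dot_eq_dotProduct (x y : Fin 3 → ℝ) : dot x y = x ⬝ᵥ y := rfl

theorem dot_comm (x y : Fin 3 → ℝ) : dot x y = dot y x := by
  simp only [dot_eq_dotProduct, dotProduct_comm]

theorem dot_add_right (x y z : Fin 3 → ℝ) : dot x (y + z) = dot x y + dot x z := by
  simp only [dot_eq_dotProduct, dotProduct_add]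

theorem HSS_of_orthogonal (lam mu A B : ℝ) {ξ1 ξ2 p1 p2 : Fin 3 → ℝ}
    (h11 : dot p1 ξ1 = 0) (h12 : dot p1 ξ2 = 0) (h21 : dot p2 ξ1 = 0) (h22 : dot p2 ξ2 = 0) :
    HSS lam mu A B ξ1 ξ2 p1 p2 =
      dot p1 p2 * ((lam + B) * dot ξ1 ξ2 * dot (ξ1 + ξ2) (ξ1 + ξ2)
        + (2 * mu + A / 2) * dot ξ1 (ξ1 + ξ2) * dot ξ2 (ξ1 + ξ2)) := by
  have hξp2 : dot ξ1 p2 = 0 := by rw [dot_comm, h21]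
  have hp1P : dot p1 (ξ1 + ξ2) = 0 := by rw [dot_add_right, h11, h12, add_zero]
  have hp2P : dot p2 (ξ1 + ξ2) = 0 := by rw [dot_add_right, h21, h22, add_zero]
  rw [HSS, hp1P, hp2P, h12, h21, hξp2]
  ring

/-- The P-wave output of the interaction of two S waves both polarized
perpendicular to the interaction plane. -/
theorem ss_interaction_VV (lam mu A B : ℝ) (ξ1 ξ2 ξV : Fin 3 → ℝ)
    (hVunit : dot ξV ξV = 1) (hV1 : dot ξV ξ1 = 0) (hV2 : dot ξV ξ2 = 0) :
    HSS lam mu A B ξ1 ξ2 ξV ξV =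
      (lam + B) * dot ξ1 ξ2 * dot (ξ1 + ξ2) (ξ1 + ξ2)
        + (2 * mu + A / 2) * dot ξ1 (ξ1 + ξ2) * dot ξ2 (ξ1 + ξ2) := by
  rw [HSS_of_orthogonal lam mu A B hV1 hV2 hV1 hV2, hVunit, one_mul]
end
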